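/- For every integer n ≥ 3 and every j with 1 ≤ j ≤ n−2, in the polynomial ring ℤ[t,z] one has det(I_n − z·ρ_{j+1} + z²·ρ_j·ρ_{j+1}) = (1 − z)·(1 − t z²)·(1 + t z³)·(1 − z + z²)^{n−3}, where ρ_j, ρ_{j+1} ∈ M_n(ℤ[t,z]) are the Tong–Yang–Ma matrices of σ_j and σ_{j+1}. -/
import Mathlib


open Matrix MvPolynomial

/-- The polynomial ring ℤ[t,z] in two commuting variables. -/
noncomputable abbrev Rtz : Type := MvPolynomial (Fin 2) ℤ

/-- The variable `t` of ℤ[t,z]. -/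
noncomputable def tv : Rtz := MvPolynomial.X 0

/-- The variable `z` of ℤ[t,z]. -/
noncomputable def zv : Rtz := MvPolynomial.X 1

/-- The Tong–Yang–Ma matrix: the identity matrix except for a 2×2 block `[[0,1],[t,0]]`
occupying rows and columns `k` and `k+1` (0-based indexing); this is `ρ_{k+1}` in 1-based
indexing. -/
noncomputable def tymMat (n : ℕ) (k : ℕ) : Matrix (Fin n) (Fin n) Rtz :=
  Matrix.of fun p q =>
    if (p : ℕ) = k ∧ (q : ℕ) = k + 1 then 1
    else if (p : ℕ) = k + 1 ∧ (q : ℕ) = k then tv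
    else if (p : ℕ) = (q : ℕ) ∧ (p : ℕ) ≠ k ∧ (p : ℕ) ≠ k + 1 then 1
    else 0

noncomputable def B0 : Matrix (Fin 3) (Fin 3) Rtz := !![0,1,0; tv,0,0; 0,0,1]
noncomputable def B1 : Matrix (Fin 3) (Fin 3) Rtz := !![1,0,0; 0,0,1; 0,tv,0]

def eEquiv (m1 m3 : ℕ) : Fin (m1 + (3 + m3)) ≃ Fin m1 ⊕ (Fin 3 ⊕ Fin m3) :=
  finSumFinEquiv.symm.trans (Equiv.sumCongr (Equiv.refl _) finSumFinEquiv.symm)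

lemma tym_blocks (m1 m3 d : ℕ) (B : Matrix (Fin 3) (Fin 3) Rtz)
    (hB : ∀ v w : Fin 3, B v w =
      if (v:ℕ) = d ∧ (w:ℕ) = d + 1 then 1
      else if (v:ℕ) = d + 1 ∧ (w:ℕ) = d then tv
      else if (v:ℕ) = (w:ℕ) ∧ (v:ℕ) ≠ d ∧ (v:ℕ) ≠ d + 1 then 1
      else 0) (hd : d + 1 < 3) :
    tymMat (m1+(3+m3)) (m1+d) =
    (fromBlocks 1 0 0 (fromBlocks B 0 0 1)).submatrix (eEquiv m1 m3) (eEquiv m1 m3) := by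
  ext p q
  simp only [submatrix_apply, eEquiv, Equiv.trans_apply]
  induction p using Fin.addCases with
  | left i =>
    induction q using Fin.addCases with
    | left i' =>
      simp [tymMat, fromBlocks, one_apply, Fin.ext_iff]
      split_ifs <;> first | rfl | omega
    | right k' =>
      induction k' using Fin.addCases with
      | left v =>
        simp [tymMat, fromBlocks]
        split_ifs <;> first | rfl | omega
      | right w =>
        simp [tymMat, fromBlocks]
        split_ifs <;> first | rfl | omega
  | right k =>
    induction k using Fin.addCases with
    | left v =>
      induction q using Fin.addCases with
      | left i' =>
        simp [tymMat, fromBlocks]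
        split_ifs <;> first | rfl | omega
      | right k' =>
        induction k' using Fin.addCases with
        | left w =>
          simp [tymMat, fromBlocks, hB v w]
          have hv := v.isLt; have hw := w.isLt
          split_ifs <;> first | rfl | omega
        | right w =>
          simp [tymMat, fromBlocks, hB]
          split_ifs <;> first | rfl | omega
    | right v =>
      induction q using Fin.addCases with
      | left i' =>
        simp [tymMat, fromBlocks]
        split_ifs <;> first | rfl | omega
      | right k' =>
        induction k' using Fin.addCases with
        | left w =>
          simp [tymMat, fromBlocks]
          split_ifs <;> first | rfl | omega
        | right w =>
          simp [tymMat, fromBlocks, one_apply, Fin.ext_iff]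
          split_ifs <;> first | rfl | omega

lemma tym0 (m1 m3 : ℕ) : tymMat (m1+(3+m3)) m1 =
    (fromBlocks 1 0 0 (fromBlocks B0 0 0 1)).submatrix (eEquiv m1 m3) (eEquiv m1 m3) := by
  have := tym_blocks m1 m3 0 B0 ?_ (by omega)
  · simpa using this
  · intro v w; fin_cases v <;> fin_cases w <;> simp [B0] <;> rfl

lemma tym1 (m1 m3 : ℕ) : tymMat (m1+(3+m3)) (m1+1) =
    (fromBlocks 1 0 0 (fromBlocks B1 0 0 1)).submatrix (eEquiv m1 m3) (eEquiv m1 m3) := by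
  refine tym_blocks m1 m3 1 B1 ?_ (by omega)
  intro v w; fin_cases v <;> fin_cases w <;> simp [B1] <;> rfl

lemma detB : (1 - zv • B1 + zv^2 • (B0 * B1) : Matrix (Fin 3) (Fin 3) Rtz).det
    = (1 - zv) * (1 - tv * zv ^ 2) * (1 + tv * zv ^ 3) := by
  simp [Matrix.det_fin_three, B0, B1, Matrix.mul_apply, Fin.sum_univ_three,
    Matrix.smul_apply, Matrix.sub_apply, Matrix.add_apply, Matrix.one_apply,
    Matrix.vecHead, Matrix.vecTail]
  ring

/-- `det(I_n − z·ρ_{j+1} + z²·ρ_j·ρ_{j+1}) = (1−z)(1−tz²)(1+tz³)(1−z+z²)^{n−3}`.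
Here `ρ_j = tymMat n (j-1)` and `ρ_{j+1} = tymMat n j` (1-based `j`). -/
theorem det_braid_fox_block (n : ℕ) (hn : 3 ≤ n) (j : ℕ) (hj1 : 1 ≤ j) (hj2 : j ≤ n - 2) :
    (1 - zv • tymMat n j + zv ^ 2 • (tymMat n (j - 1) * tymMat n j)).det
      = (1 - zv) * (1 - tv * zv ^ 2) * (1 + tv * zv ^ 3) * (1 - zv + zv ^ 2) ^ (n - 3) := by
  obtain ⟨m1, m3, rfl, rfl⟩ : ∃ m1 m3, j = m1 + 1 ∧ n = m1 + (3 + m3) :=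
    ⟨j - 1, n - j - 2, by omega, by omega⟩
  have hn3 : m1 + (3 + m3) - 3 = m1 + m3 := by omega
  rw [hn3, Nat.add_sub_cancel, tym0, tym1, submatrix_mul_equiv,
    ← Matrix.submatrix_one_equiv (eEquiv m1 m3)]
  have hre : ((1 : Matrix (Fin m1 ⊕ (Fin 3 ⊕ Fin m3)) (Fin m1 ⊕ (Fin 3 ⊕ Fin m3)) Rtz).submatrix
        (eEquiv m1 m3) (eEquiv m1 m3)
      - zv • (fromBlocks 1 0 0 (fromBlocks B1 0 0 1)
          : Matrix (Fin m1 ⊕ (Fin 3 ⊕ Fin m3)) (Fin m1 ⊕ (Fin 3 ⊕ Fin m3)) Rtz).submatrix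
            (eEquiv m1 m3) (eEquiv m1 m3)
      + zv ^ 2 • ((fromBlocks 1 0 0 (fromBlocks B0 0 0 1)
          * fromBlocks 1 0 0 (fromBlocks B1 0 0 1)
          : Matrix (Fin m1 ⊕ (Fin 3 ⊕ Fin m3)) (Fin m1 ⊕ (Fin 3 ⊕ Fin m3)) Rtz).submatrix
            (eEquiv m1 m3) (eEquiv m1 m3)))
      = ((1 : Matrix (Fin m1 ⊕ (Fin 3 ⊕ Fin m3)) (Fin m1 ⊕ (Fin 3 ⊕ Fin m3)) Rtz)
          - zv • fromBlocks 1 0 0 (fromBlocks B1 0 0 1)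
          + zv ^ 2 • (fromBlocks 1 0 0 (fromBlocks B0 0 0 1)
              * fromBlocks 1 0 0 (fromBlocks B1 0 0 1))).submatrix
        (eEquiv m1 m3) (eEquiv m1 m3) := rfl
  rw [hre, Matrix.det_submatrix_equiv_self]
  have key : (1 - zv • (fromBlocks 1 0 0 (fromBlocks B1 0 0 1))
      + zv ^ 2 • (fromBlocks 1 0 0 (fromBlocks B0 0 0 1)
          * fromBlocks 1 0 0 (fromBlocks B1 0 0 1))
      : Matrix (Fin m1 ⊕ (Fin 3 ⊕ Fin m3)) (Fin m1 ⊕ (Fin 3 ⊕ Fin m3)) Rtz)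
      = fromBlocks ((1 - zv + zv ^ 2) • 1) 0 0
          (fromBlocks (1 - zv • B1 + zv ^ 2 • (B0 * B1)) 0 0 ((1 - zv + zv ^ 2) • 1)) := by
    rw [fromBlocks_multiply, fromBlocks_multiply]
    refine Matrix.ext fun i k => ?_
    rcases i with i | i | i <;> rcases k with k | k | k <;>
      simp [fromBlocks, Matrix.sub_apply, Matrix.add_apply, Matrix.smul_apply,
        Matrix.one_apply] <;> split_ifs <;> ring
  rw [key, det_fromBlocks_zero₂₁, det_fromBlocks_zero₂₁, detB]
  simp [Matrix.det_smul, Fintype.card_fin]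
  ring
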